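/- (Motzkin number identity) For every n ∈ ℕ, M(n) = ∑_{k=0}^{⌊n/2⌋} n!/((n−2k)!·(k+1)!·k!); equivalently, M(n) = ∑_{k=0}^{⌊n/2⌋} (n choose 2k)·catalan(k). -/
import Mathlib


/-- The Motzkin numbers: `M 0 = 1`, `M 1 = 1` and, for `n ≥ 2`,
`M n = M (n-1) + ∑_{i=0}^{n-2} M i * M (n-2-i)`. -/
def motzkin : ℕ → ℕ
  | 0 => 1
  | 1 => 1
  | n + 2 =>
      motzkin (n + 1) +
        ∑ i ∈ (Finset.range (n + 1)).attach, motzkin i.1 * motzkin (n - i.1)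
decreasing_by
  all_goals
    first
      | omega
      | (have h := Finset.mem_range.mp i.2; omega)
open Finset Nat

lemma range_choose_col (a N : ℕ) : ∑ m ∈ range N, m.choose a = N.choose (a+1) := by
  induction N with
  | zero => simp
  | succ N ih => rw [sum_range_succ, ih, Nat.choose_succ_succ']; ring

lemma vand (a : ℕ) : ∀ b n : ℕ, ∑ i ∈ range (n+1), (i.choose a) * ((n-i).choose b)
    = (n+1).choose (a+b+1) := by
  intro b n
  induction n generalizing b with
  | zero =>
    cases a <;> cases b <;> simp [Nat.choose]
  | succ n ih =>
    cases b with
    | zero =>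
      simp only [Nat.choose_zero_right, mul_one]
      rw [range_choose_col]
    | succ b =>
      rw [sum_range_succ]
      have h1 : ∑ i ∈ range (n+1), (i.choose a) * ((n+1-i).choose (b+1))
          = ∑ i ∈ range (n+1), ((i.choose a) * ((n-i).choose b)
              + (i.choose a) * ((n-i).choose (b+1))) := by
        refine Finset.sum_congr rfl fun i hi => ?_
        have : n + 1 - i = (n - i) + 1 := by
          have := Finset.mem_range.mp hi; omega
        rw [this, Nat.choose_succ_succ, Nat.mul_add]
      rw [h1, Finset.sum_add_distrib, ih b, ih (b+1)]
      simp [Nat.choose_succ_succ (n+1)]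
      ring

lemma tri {M : Type*} [AddCommMonoid M] (g : ℕ → ℕ → M) (N : ℕ) :
    ∑ k ∈ range N, ∑ j ∈ range (k+1), g j (k-j)
      = ∑ j ∈ range N, ∑ l ∈ range (N-j), g j l := by
  induction N with
  | zero => simp
  | succ N ih =>
    rw [sum_range_succ, ih, sum_range_succ]
    have h2 : ∀ j ∈ range N, ∑ l ∈ range (N+1-j), g j l
        = ∑ l ∈ range (N-j), g j l + g j (N-j) := by
      intro j hj
      have hj' := Finset.mem_range.mp hj
      have : N + 1 - j = (N - j) + 1 := by omega
      rw [this, sum_range_succ]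
    conv_rhs => rw [sum_range_succ, Finset.sum_congr rfl h2]
    rw [Finset.sum_add_distrib]
    simp [Nat.sub_self, add_assoc]

lemma catalan_succ_range (k : ℕ) :
    catalan (k+1) = ∑ j ∈ range (k+1), catalan j * catalan (k-j) := by
  rw [catalan_succ]
  exact (Finset.sum_range fun j => catalan j * catalan (k - j)).symm

lemma pad (i m : ℕ) (h : i ≤ 2*m+1) :
    ∑ k ∈ range (i/2+1), i.choose (2*k) * catalan k
      = ∑ k ∈ range (m+1), i.choose (2*k) * catalan k := by
  apply Finset.sum_subset
  · exact Finset.range_subset_range.mpr (by omega)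
  · intro k hk hk2
    have h1 := Finset.mem_range.mp hk
    have h2 : i < 2*k := by
      have hge : ¬ k < i/2+1 := fun h => hk2 (Finset.mem_range.mpr h)
      omega
    rw [Nat.choose_eq_zero_of_lt h2, zero_mul]

lemma key (n : ℕ) :
    ∑ k ∈ range (n+2), (n+2).choose (2*k) * catalan k
      = (∑ k ∈ range (n+2), (n+1).choose (2*k) * catalan k)
        + ∑ i ∈ range (n+1), (∑ k ∈ range (n+2), i.choose (2*k) * catalan k)
            * (∑ k ∈ range (n+2), (n-i).choose (2*k) * catalan k) := by
  -- Abbreviations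
  set c := catalan with hc
  -- Left side: peel off k = 0 and use Pascal
  have hL : ∑ k ∈ range (n+2), (n+2).choose (2*k) * c k
      = 1 + (∑ k ∈ range (n+1), (n+1).choose (2*(k+1)) * c (k+1)
          + ∑ k ∈ range (n+1), (n+1).choose (2*k+1) * c (k+1)) := by
    rw [Finset.sum_range_succ']
    have h : ∀ k ∈ range (n+1), (n+2).choose (2*(k+1)) * c (k+1)
        = (n+1).choose (2*(k+1)) * c (k+1) + (n+1).choose (2*k+1) * c (k+1) := by
      intro k _
      have e : 2*(k+1) = (2*k+1)+1 := by ring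
      rw [e, Nat.choose_succ_succ, Nat.add_mul]
      ring
    rw [Finset.sum_congr rfl h, Finset.sum_add_distrib]
    simp only [Nat.mul_zero, Nat.choose_zero_right, one_mul, hc, catalan_zero]
    ring
  have hM : ∑ k ∈ range (n+2), (n+1).choose (2*k) * c k
      = 1 + ∑ k ∈ range (n+1), (n+1).choose (2*(k+1)) * c (k+1) := by
    rw [Finset.sum_range_succ']
    simp only [Nat.mul_zero, Nat.choose_zero_right, one_mul, hc, catalan_zero]
    ring
  -- the cross sum A
  have hA : ∑ k ∈ range (n+1), (n+1).choose (2*k+1) * c (k+1)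
      = ∑ j ∈ range (n+2), ∑ l ∈ range (n+2),
          (n+1).choose (2*(j+l)+1) * (c j * c l) := by
    have step0 : ∑ k ∈ range (n+2), (n+1).choose (2*k+1) * c (k+1)
        = ∑ k ∈ range (n+1), (n+1).choose (2*k+1) * c (k+1) := by
      rw [sum_range_succ, Nat.choose_eq_zero_of_lt (by omega), zero_mul, add_zero]
    have step1 : ∑ k ∈ range (n+2), (n+1).choose (2*k+1) * c (k+1)
        = ∑ k ∈ range (n+2), ∑ j ∈ range (k+1),
            (n+1).choose (2*(j+(k-j))+1) * (c j * c (k-j)) := by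
      refine Finset.sum_congr rfl fun k hk => ?_
      rw [hc, catalan_succ_range k, Finset.mul_sum]
      refine Finset.sum_congr rfl fun j hj => ?_
      have hj' := Finset.mem_range.mp hj
      have h : j + (k - j) = k := by omega
      rw [h]
    rw [← step0, step1,
      tri (fun j l => (n+1).choose (2*(j+l)+1) * (c j * c l)) (n+2)]
    refine Finset.sum_congr rfl fun j hj => ?_
    apply Finset.sum_subset
    · exact Finset.range_subset_range.mpr (by omega)
    · intro l hl hl2
      have h1 := Finset.mem_range.mp hl
      have h2 : ¬ l < n+2-j := fun h => hl2 (Finset.mem_range.mpr h)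
      have : n + 1 < 2*(j+l)+1 := by omega
      rw [Nat.choose_eq_zero_of_lt this, zero_mul]
  -- the convolution sum B
  have hB : ∑ i ∈ range (n+1), (∑ k ∈ range (n+2), i.choose (2*k) * c k)
        * (∑ k ∈ range (n+2), (n-i).choose (2*k) * c k)
      = ∑ j ∈ range (n+2), ∑ l ∈ range (n+2),
          (n+1).choose (2*(j+l)+1) * (c j * c l) := by
    have e1 : ∀ i ∈ range (n+1),
        (∑ k ∈ range (n+2), i.choose (2*k) * c k)
          * (∑ k ∈ range (n+2), (n-i).choose (2*k) * c k)
        = ∑ j ∈ range (n+2), ∑ l ∈ range (n+2),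
            (i.choose (2*j) * (n-i).choose (2*l)) * (c j * c l) := by
      intro i _
      rw [Finset.sum_mul_sum]
      exact Finset.sum_congr rfl fun j _ => Finset.sum_congr rfl fun l _ => by ring
    rw [Finset.sum_congr rfl e1, Finset.sum_comm]
    refine Finset.sum_congr rfl fun j _ => ?_
    rw [Finset.sum_comm]
    refine Finset.sum_congr rfl fun l _ => ?_
    rw [← Finset.sum_mul, vand (2*j) (2*l) n]
    congr 2
    ring
  rw [hL, hM, hA, hB]
  ring

lemma motzkin_eq (n : ℕ) :
    motzkin n = ∑ k ∈ range (n/2+1), n.choose (2*k) * catalan k := by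
  induction n using Nat.strong_induction_on with
  | _ n ih =>
    match n with
    | 0 => simp [motzkin]
    | 1 => simp [motzkin]
    | n+2 =>
      rw [motzkin, Finset.sum_attach (range (n+1)) (fun i => motzkin i * motzkin (n - i))]
      rw [ih (n+1) (by omega)]
      have hconv : ∑ i ∈ range (n+1), motzkin i * motzkin (n-i)
          = ∑ i ∈ range (n+1), (∑ k ∈ range (n+2), i.choose (2*k) * catalan k)
              * (∑ k ∈ range (n+2), (n-i).choose (2*k) * catalan k) := by
        refine Finset.sum_congr rfl fun i hi => ?_
        have hi' := Finset.mem_range.mp hi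
        rw [ih i (by omega), ih (n-i) (by omega), pad i (n+1) (by omega),
          pad (n-i) (n+1) (by omega)]
      rw [hconv, pad (n+1) (n+1) (by omega), pad (n+2) (n+1) (by omega)]
      exact (key n).symm

lemma term_eq (n k : ℕ) (hk : 2*k ≤ n) :
    n.factorial / ((n - 2*k).factorial * (k+1).factorial * k.factorial)
      = n.choose (2*k) * catalan k := by
  have hpos : 0 < (n - 2*k).factorial * (k+1).factorial * k.factorial :=
    Nat.mul_pos (Nat.mul_pos (Nat.factorial_pos _) (Nat.factorial_pos _)) (Nat.factorial_pos _)
  refine Nat.div_eq_of_eq_mul_left hpos ?_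
  have hc : (2*k).choose k * k.factorial * k.factorial = (2*k).factorial := by
    have h := Nat.choose_mul_factorial_mul_factorial (show k ≤ 2*k by omega)
    have e : 2*k - k = k := by omega
    rwa [e] at h
  have hcb : (k+1) * catalan k = (2*k).choose k := by
    rw [succ_mul_catalan_eq_centralBinom, Nat.centralBinom_eq_two_mul_choose]
  have hn : n.choose (2*k) * (2*k).factorial * (n - 2*k).factorial = n.factorial :=
    Nat.choose_mul_factorial_mul_factorial hk
  calc n.factorial = n.choose (2*k) * (2*k).factorial * (n - 2*k).factorial := hn.symm
    _ = n.choose (2*k) * ((2*k).choose k * k.factorial * k.factorial) * (n - 2*k).factorial := by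
        rw [hc]
    _ = n.choose (2*k) * (((k+1) * catalan k) * k.factorial * k.factorial) * (n - 2*k).factorial := by
        rw [hcb]
    _ = n.choose (2*k) * catalan k
          * ((n - 2*k).factorial * (k+1).factorial * k.factorial) := by
        rw [Nat.factorial_succ]; ring

theorem motzkin_closed_form (n : ℕ) :
    motzkin n =
        ∑ k ∈ Finset.range (n / 2 + 1),
          n.factorial / ((n - 2 * k).factorial * (k + 1).factorial * k.factorial) ∧
      motzkin n = ∑ k ∈ Finset.range (n / 2 + 1), n.choose (2 * k) * catalan k := by
  refine ⟨?_, motzkin_eq n⟩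
  rw [motzkin_eq n]
  refine Finset.sum_congr rfl fun k hk => ?_
  have hk' : 2*k ≤ n := by have := Finset.mem_range.mp hk; omega
  exact (term_eq n k hk').symm
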